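/- arXiv:0810.5423 — 2 statements merged into one kernel-verified Lean document; each statement's English description precedes it below -/
import Mathlib

section
/- Let g_0(λ) = λ/(1−λ)² on ℝ \ {1}, and define inductively g_{j+1}(λ) = λ · g_j′(λ). Then for every natural number k and every real λ with λ ≠ 0 and λ ≠ 1, one has ((1−λ)^{k+2}/λ) · g_k(λ) = Σ_{i=1}^{k+1} Δ^i 0^{k+1} · (λ−1)^{k+1−i}; that is, the Euler polynomial E_k(λ) = ((1−λ)^{k+2}/λ)·D^k(λ/(1−λ)²) (with D = λ d/dλ) coincides with the polynomial P_k(λ) = (λ−1)^{k+1} Σ_{i=1}^{k+1} Δ^i 0^{k+1}/(λ−1)^i. -/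
/-- The `i`-th forward finite difference of the function `γ ↦ γ^k` evaluated at the
point `a`, i.e. `Δ^i a^k = ∑_{j=0}^{i} (-1)^(i-j) C(i,j) (a+j)^k` (with `0^0 = 1`). -/
noncomputable def finDiff (i k : ℕ) (a : ℝ) : ℝ :=
  ∑ j ∈ Finset.range (i + 1), (-1 : ℝ) ^ (i - j) * (i.choose j : ℝ) * (a + (j : ℝ)) ^ k

/-!
Put `e_i(λ) = λ / (λ - 1)^(i+1)`. Then `-λ e_i' = i e_i + (i+1) e_{i+1}`, so `(-D)^k e_1` is a
combination `∑ c_{k,i} e_i` with `c_{k+1,i} = i (c_{k,i} + c_{k,i-1})`. The Leibniz rule for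
`γ^(k+1) = γ · γ^k` gives the same recurrence `Δ^i 0^(k+1) = i (Δ^i 0^k + Δ^(i-1) 0^k)`, hence
`D^k (λ / (1 - λ)^2) = (-1)^k ∑ Δ^i 0^(k+1) e_i`, and multiplying by `(1 - λ)^(k+2) / λ` turns each
`e_i` into `(λ - 1)^(k+1-i)`.
-/

open Finset

lemma finDiff_eq_fwdDiff_iter (i k : ℕ) (a : ℝ) :
    finDiff i k a = (fwdDiff 1)^[i] (fun x : ℝ => x ^ k) a := by
  rw [fwdDiff_iter_eq_sum_shift, finDiff]
  refine sum_congr rfl fun j _ => ?_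
  push_cast [zsmul_eq_mul]
  ring

lemma finDiff_zero_left (k : ℕ) (a : ℝ) : finDiff 0 k a = a ^ k := by
  simp [finDiff]

lemma finDiff_succ_left (i k : ℕ) (a : ℝ) :
    finDiff (i + 1) k a = finDiff i k (a + 1) - finDiff i k a := by
  simp only [finDiff_eq_fwdDiff_iter, Function.iterate_succ_apply', fwdDiff]

lemma finDiff_eq_zero_of_lt {i k : ℕ} (h : k < i) (a : ℝ) : finDiff i k a = 0 := by
  rw [finDiff_eq_fwdDiff_iter, fwdDiff_iter_pow_eq_zero_of_lt h, Pi.zero_apply]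

lemma finDiff_succ_succ (i k : ℕ) (a : ℝ) :
    finDiff (i + 1) (k + 1) a = a * finDiff (i + 1) k a + (i + 1) * finDiff i k (a + 1) := by
  have hsplit : finDiff (i + 1) (k + 1) a = a * finDiff (i + 1) k a +
      ∑ j ∈ range (i + 2), (-1 : ℝ) ^ (i + 1 - j) * ((i + 1).choose j : ℝ) * j * (a + j) ^ k := by
    simp only [finDiff, mul_sum, ← sum_add_distrib, pow_succ]
    exact sum_congr rfl fun j _ => by ring
  rw [hsplit, sum_range_succ']
  congr 1
  simp only [finDiff, mul_sum, Nat.cast_zero, mul_zero, zero_mul, add_zero, Nat.add_sub_add_right]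
  refine sum_congr rfl fun j _ => ?_
  have hchoose : ((i + 1).choose (j + 1) : ℝ) * (j + 1) = (i + 1) * (i.choose j : ℝ) := by
    exact_mod_cast (Nat.add_one_mul_choose_eq i j).symm
  push_cast
  linear_combination (-1 : ℝ) ^ (i - j) * (a + (j + 1)) ^ k * hchoose

lemma finDiff_succ_succ_zero (i k : ℕ) :
    finDiff (i + 1) (k + 1) 0 = (i + 1) * (finDiff (i + 1) k 0 + finDiff i k 0) := by
  rw [finDiff_succ_succ, zero_mul, zero_add, zero_add, finDiff_succ_left, zero_add]
  ring

noncomputable def eulerFrac (i : ℕ) (x : ℝ) : ℝ := x / (x - 1) ^ (i + 1)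

lemma hasDerivAt_eulerFrac (i : ℕ) {x : ℝ} (hx : x ≠ 1) :
    HasDerivAt (eulerFrac i) ((x - 1 - (i + 1) * x) / (x - 1) ^ (i + 2)) x := by
  have hx' : x - 1 ≠ 0 := sub_ne_zero.2 hx
  refine ((hasDerivAt_id' x).fun_div (((hasDerivAt_id' x).sub_const 1).fun_pow (i + 1))
    (pow_ne_zero _ hx')).congr_deriv ?_
  field_simp
  push_cast
  ring

lemma mul_deriv_eulerFrac (i : ℕ) {x : ℝ} (hx : x ≠ 1) :
    x * deriv (eulerFrac i) x = -(i * eulerFrac i x + (i + 1) * eulerFrac (i + 1) x) := by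
  have hx' : x - 1 ≠ 0 := sub_ne_zero.2 hx
  rw [(hasDerivAt_eulerFrac i hx).deriv, eulerFrac, eulerFrac]
  field_simp
  ring

lemma mul_deriv_sum_eulerFrac (c : ℕ → ℝ) (n : ℕ) {x : ℝ} (hx : x ≠ 1) :
    x * deriv (fun y => ∑ i ∈ range n, c i * eulerFrac i y) x =
      -∑ i ∈ range n, c i * (i * eulerFrac i x + (i + 1) * eulerFrac (i + 1) x) := by
  rw [deriv_fun_sum fun i _ => ((hasDerivAt_eulerFrac i hx).const_mul (c i)).differentiableAt,
    mul_sum, ← sum_neg_distrib]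
  refine sum_congr rfl fun i _ => ?_
  rw [deriv_const_mul _ (hasDerivAt_eulerFrac i hx).differentiableAt, mul_left_comm,
    mul_deriv_eulerFrac i hx, mul_neg]

lemma sum_finDiff_mul_bidiag (k : ℕ) (e : ℕ → ℝ) :
    ∑ i ∈ range (k + 2), finDiff i (k + 1) 0 * (i * e i + (i + 1) * e (i + 1)) =
      ∑ i ∈ range (k + 3), finDiff i (k + 2) 0 * e i := by
  have hdiag : ∑ i ∈ range (k + 2), finDiff i (k + 1) 0 * (i * e i) =
      ∑ i ∈ range (k + 2), (i + 1) * finDiff (i + 1) (k + 1) 0 * e (i + 1) := by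
    rw [sum_range_succ', sum_range_succ _ (k + 1), finDiff_eq_zero_of_lt (Nat.lt_succ_self _)]
    simp only [Nat.cast_zero, zero_mul, mul_zero, add_zero, Nat.cast_add, Nat.cast_one]
    exact sum_congr rfl fun i _ => by ring
  rw [sum_range_succ' _ (k + 2), finDiff_zero_left, zero_pow (Nat.succ_ne_zero _), zero_mul,
    add_zero]
  simp only [finDiff_succ_succ_zero _ (k + 1), mul_add, sum_add_distrib, hdiag]
  rw [← sum_add_distrib]
  exact sum_congr rfl fun i _ => by ring

noncomputable def eulerIter (k : ℕ) (x : ℝ) : ℝ :=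
  (-1) ^ k * ∑ i ∈ range (k + 2), finDiff i (k + 1) 0 * eulerFrac i x

lemma eulerIter_zero (x : ℝ) : eulerIter 0 x = x / (1 - x) ^ 2 := by
  norm_num [eulerIter, finDiff, eulerFrac, sum_range_succ]
  ring

lemma mul_deriv_eulerIter (k : ℕ) {x : ℝ} (hx : x ≠ 1) :
    x * deriv (eulerIter k) x = eulerIter (k + 1) x := by
  have hexpand : eulerIter k =
      fun y => ∑ i ∈ range (k + 2), ((-1) ^ k * finDiff i (k + 1) 0) * eulerFrac i y :=
    funext fun y => by simp only [eulerIter, mul_sum, mul_assoc]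
  rw [hexpand, mul_deriv_sum_eulerFrac _ _ hx, eulerIter, ← sum_finDiff_mul_bidiag, mul_sum,
    ← sum_neg_distrib]
  exact sum_congr rfl fun i _ => by ring

lemma eq_eulerIter_of_rec (g : ℕ → ℝ → ℝ)
    (hg0 : ∀ x : ℝ, g 0 x = x / (1 - x) ^ 2)
    (hgrec : ∀ (j : ℕ) (x : ℝ), g (j + 1) x = x * deriv (g j) x)
    (k : ℕ) {x : ℝ} (hx : x ≠ 1) : g k x = eulerIter k x := by
  induction k generalizing x with
  | zero => rw [hg0, eulerIter_zero]
  | succ k ih =>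
    have hlocal : g k =ᶠ[nhds x] eulerIter k :=
      Filter.eventually_of_mem (isOpen_ne.mem_nhds hx) fun y hy => ih hy
    rw [hgrec, hlocal.deriv_eq, mul_deriv_eulerIter k hx]

lemma neg_one_pow_mul_one_sub_pow (k : ℕ) (x : ℝ) :
    (-1) ^ k * (1 - x) ^ (k + 2) = (x - 1) ^ (k + 2) := by
  rw [← neg_sub x 1, neg_pow (x - 1), ← mul_assoc, ← pow_add,
    Even.neg_one_pow (⟨k + 1, by ring⟩ : Even (k + (k + 2))), one_mul]

lemma one_sub_pow_div_mul_eulerIter (k : ℕ) {x : ℝ} (hx0 : x ≠ 0) (hx1 : x ≠ 1) :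
    (1 - x) ^ (k + 2) / x * eulerIter k x =
      ∑ i ∈ range (k + 2), finDiff i (k + 1) 0 * (x - 1) ^ (k + 1 - i) := by
  rw [eulerIter, mul_sum, mul_sum]
  refine sum_congr rfl fun i hi => ?_
  have hik : i + 1 ≤ k + 2 := mem_range.1 hi
  rw [show k + 1 - i = k + 2 - (i + 1) by omega, pow_sub₀ _ (sub_ne_zero.2 hx1) hik,
    ← neg_one_pow_mul_one_sub_pow, eulerFrac]
  field_simp

/-- Let `g 0 (λ) = λ/(1-λ)²` and `g (j+1) (λ) = λ * (g j)'(λ)`.  Then for every natural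
`k` and every real `λ ∉ {0, 1}` one has
`((1-λ)^(k+2)/λ) * g k λ = ∑_{i=1}^{k+1} Δ^i 0^{k+1} (λ-1)^{k+1-i}`,
i.e. the Euler polynomial `E_k(λ) = ((1-λ)^{k+2}/λ) D^k (λ/(1-λ)²)` (with `D = λ d/dλ`)
coincides with the polynomial `P_k(λ) = (λ-1)^{k+1} ∑_{i=1}^{k+1} Δ^i 0^{k+1}/(λ-1)^i`. -/
theorem euler_poly_eq (g : ℕ → ℝ → ℝ)
    (hg0 : ∀ x : ℝ, g 0 x = x / (1 - x) ^ 2)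
    (hgrec : ∀ (j : ℕ) (x : ℝ), g (j + 1) x = x * deriv (g j) x)
    (k : ℕ) (l : ℝ) (hl0 : l ≠ 0) (hl1 : l ≠ 1) :
    (1 - l) ^ (k + 2) / l * g k l =
      ∑ i ∈ Finset.Icc 1 (k + 1), finDiff i (k + 1) 0 * (l - 1) ^ (k + 1 - i) := by
  rw [eq_eulerIter_of_rec g hg0 hgrec k hl1, one_sub_pow_div_mul_eulerIter k hl0 hl1,
    sum_range_eq_add_Ico _ (by omega : 0 < k + 2), finDiff_zero_left, zero_pow (Nat.succ_ne_zero _),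
    zero_mul, zero_add, ← Ico_add_one_right_eq_Icc]
  rfl
end

section
/- For every integer β and every natural number n ≤ 1 (i.e. n = 0 or n = 1), the series Σ_{γ∈ℤ} D_2(γ) (h(β−γ))^n converges absolutely and equals 0; consequently the discrete convolution of D_2 with any polynomial of degree at most 2m−3 = 1 sampled at the points hβ is identically zero. -/
/-!
`D₂` is even and equals `(A/p) λ^{|k|-1}` for `|k| ≥ 2`, so for `|λ| < 1` its first moment
vanishes by oddness and its total mass is `D₂(0) + 2 D₂(1) + 2 (A/p) λ/(1-λ)`. That this mass is
zero comes from the root condition. Writing `P₂(x) = p x² + p₁ x + p` gives `λ P₂'(λ) = p(λ²-1)`,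
whence `A h (1+λ) = -(1-e^{2h})(1-λ)³`, while `(2C - 4e^h) p = 2(1-e^{2h})(1-e^h)²`. After
cancelling the common factor `1-e^{2h}` what is left is `(1-λ)² p = 2hλ(1-e^h)²`, the root
condition once more.
-/

/-- The polynomial `P_2(λ) = (1-e^{2h})(1-λ)² - 2h(λ(e^{2h}+1) - e^h(λ²+1))`. -/
noncomputable def P2 (h x : ℝ) : ℝ :=
  (1 - Real.exp (2 * h)) * (1 - x) ^ 2 -
    2 * h * (x * (Real.exp (2 * h) + 1) - Real.exp h * (x ^ 2 + 1))

namespace Function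

variable {α : Type*} [AddCommGroup α] [TopologicalSpace α] [IsTopologicalAddGroup α]
  {f : ℤ → α} {a : α}

theorem Even.hasSum_int (hf : f.Even) (h : HasSum (fun n : ℕ => f (n + 1)) a) :
    HasSum f (f 0 + 2 • a) := by
  have hneg : HasSum (fun n : ℕ => f (-(n + 1))) a := by simpa only [hf _] using h
  convert h.of_add_one_of_neg_add_one hneg using 1
  rw [two_nsmul]; abel

theorem Odd.hasSum_int_zero [IsAddTorsionFree α] (hf : f.Odd)
    (h : Summable fun n : ℕ => f (n + 1)) : HasSum f 0 := by
  have hneg : HasSum (fun n : ℕ => f (-(n + 1))) (-∑' n : ℕ, f (n + 1)) := by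
    simpa only [hf _] using h.hasSum.neg
  simpa [hf.map_zero] using h.hasSum.of_add_one_of_neg_add_one hneg

end Function

noncomputable def symmGeomKernel (a₀ a₁ c r : ℝ) (k : ℤ) : ℝ :=
  if k = 0 then a₀ else if k.natAbs = 1 then a₁ else c * r ^ (k.natAbs - 1)

namespace symmGeomKernel

variable {a₀ a₁ c r : ℝ}

theorem even : (symmGeomKernel a₀ a₁ c r).Even := fun k => by
  simp [symmGeomKernel]

theorem apply_natCast_add_two (j : ℕ) :
    symmGeomKernel a₀ a₁ c r (j + 2) = c * r * r ^ j := by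
  have hexp : ((j : ℤ) + 2).natAbs - 1 = j + 1 := by omega
  rw [symmGeomKernel, if_neg (by omega), if_neg (by omega), hexp, pow_succ', mul_assoc]

theorem hasSum_natCast_add_one (hr : |r| < 1) :
    HasSum (fun n : ℕ => symmGeomKernel a₀ a₁ c r (n + 1)) (a₁ + c * r / (1 - r)) := by
  have htail : (fun j : ℕ => symmGeomKernel a₀ a₁ c r ((j + 1 : ℕ) + 1)) =
      fun j => c * r * r ^ j := funext fun j => by
    rw [show (((j + 1 : ℕ) : ℤ) + 1) = (j : ℤ) + 2 by push_cast; ring, apply_natCast_add_two]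
  have hgeom := (hasSum_geometric_of_abs_lt_one hr).mul_left (c * r)
  rw [← htail, ← div_eq_mul_inv] at hgeom
  have hone : symmGeomKernel a₀ a₁ c r (((0 : ℕ) : ℤ) + 1) = a₁ := by simp [symmGeomKernel]
  have := HasSum.zero_add (f := fun n : ℕ => symmGeomKernel a₀ a₁ c r (n + 1)) hgeom
  rwa [hone] at this

theorem hasSum (hr : |r| < 1) :
    HasSum (symmGeomKernel a₀ a₁ c r) (a₀ + 2 * (a₁ + c * r / (1 - r))) := by
  have := even.hasSum_int (hasSum_natCast_add_one (a₀ := a₀) (a₁ := a₁) (c := c) hr)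
  rwa [nsmul_eq_mul, Nat.cast_ofNat, show symmGeomKernel a₀ a₁ c r 0 = a₀ from if_pos rfl] at this

theorem hasSum_intCast_mul (hr : |r| < 1) :
    HasSum (fun k : ℤ => (k : ℝ) * symmGeomKernel a₀ a₁ c r k) 0 := by
  have hodd : (fun k : ℤ => (k : ℝ) * symmGeomKernel a₀ a₁ c r k).Odd := fun k => by
    simp [even.eq k]
  refine hodd.hasSum_int_zero ((summable_nat_add_iff 1).mp ?_)
  have htail : (fun n : ℕ => ((((n + 1 : ℕ) : ℤ) + 1 : ℤ) : ℝ) *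
      symmGeomKernel a₀ a₁ c r (((n + 1 : ℕ) : ℤ) + 1)) =
      fun n : ℕ => c * r * ((n : ℝ) ^ 1 * r ^ n) + 2 * c * r * r ^ n := funext fun n => by
    rw [show (((n + 1 : ℕ) : ℤ) + 1) = (n : ℤ) + 2 by push_cast; ring, apply_natCast_add_two]
    push_cast; ring
  have hr' : ‖r‖ < 1 := by rwa [Real.norm_eq_abs]
  rw [htail]
  exact ((summable_pow_mul_geometric_of_norm_lt_one 1 hr').mul_left (c * r)).add
    ((summable_geometric_of_abs_lt_one hr).mul_left (2 * c * r))

end symmGeomKernel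

open Real

section P2

variable {h p p1 : ℝ}

theorem P2_eq_quadratic (hp : p = (1 - exp (2 * h)) + 2 * h * exp h)
    (hp1 : p1 = -2 * (1 - exp (2 * h)) - 2 * h * (exp (2 * h) + 1)) (x : ℝ) :
    P2 h x = p * x ^ 2 + p1 * x + p := by
  subst hp hp1; unfold P2; ring

theorem deriv_P2 (hp : p = (1 - exp (2 * h)) + 2 * h * exp h)
    (hp1 : p1 = -2 * (1 - exp (2 * h)) - 2 * h * (exp (2 * h) + 1)) (x : ℝ) :
    deriv (P2 h) x = 2 * p * x + p1 := by
  have hquad : HasDerivAt (fun y => p * y ^ 2 + p1 * y + p) (2 * p * x + p1) x :=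
    ((((hasDerivAt_pow 2 x).const_mul p).add ((hasDerivAt_id x).const_mul p1)).add_const p
      ).congr_deriv (by simp; ring)
  rw [funext (P2_eq_quadratic hp hp1)]
  exact hquad.deriv

variable {lam : ℝ}

theorem mul_deriv_P2_eq_of_root (hp : p = (1 - exp (2 * h)) + 2 * h * exp h)
    (hp1 : p1 = -2 * (1 - exp (2 * h)) - 2 * h * (exp (2 * h) + 1)) (hroot : P2 h lam = 0) :
    lam * deriv (P2 h) lam = p * (lam ^ 2 - 1) := by
  rw [deriv_P2 hp hp1]
  linear_combination (P2_eq_quadratic hp hp1 lam).symm.trans hroot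

theorem ne_zero_of_P2_root (hp : p = (1 - exp (2 * h)) + 2 * h * exp h) (hpne : p ≠ 0)
    (hroot : P2 h lam = 0) : lam ≠ 0 := by
  rintro rfl
  apply hpne
  rw [hp, ← hroot, P2]
  ring

theorem exp_two_mul_eq_sq (x : ℝ) : exp (2 * x) = exp x ^ 2 := by
  rw [two_mul, exp_add, sq]

theorem one_sub_sq_mul_of_P2_root (hp : p = (1 - exp (2 * h)) + 2 * h * exp h)
    (hp1 : p1 = -2 * (1 - exp (2 * h)) - 2 * h * (exp (2 * h) + 1)) (hroot : P2 h lam = 0) :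
    (1 - lam) ^ 2 * p = 2 * h * lam * (1 - exp h) ^ 2 := by
  rw [P2_eq_quadratic hp hp1] at hroot
  rw [exp_two_mul_eq_sq] at hp hp1
  linear_combination hroot - 2 * lam * hp - lam * hp1

theorem coeff_mul_eq_of_P2_root {A : ℝ} (hp : p = (1 - exp (2 * h)) + 2 * h * exp h)
    (hp1 : p1 = -2 * (1 - exp (2 * h)) - 2 * h * (exp (2 * h) + 1)) (hpne : p ≠ 0)
    (hroot : P2 h lam = 0) (hlam : lam ^ 2 ≠ 1)
    (hA : A = 2 * (1 - lam) ^ 2 *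
        (lam * (exp (2 * h) + 1) - exp h * (lam ^ 2 + 1)) * p / (lam * deriv (P2 h) lam)) :
    A * (h * (1 + lam)) = -((1 - exp (2 * h)) * (1 - lam) ^ 3) := by
  rw [hA, mul_deriv_P2_eq_of_root hp hp1 hroot]
  have hlam' : lam ^ 2 - 1 ≠ 0 := sub_ne_zero.mpr hlam
  unfold P2 at hroot
  field_simp
  linear_combination (-(1 - lam) ^ 2 * (1 + lam)) * hroot

theorem two_mul_sub_four_exp_mul_eq {C : ℝ} (hp : p = (1 - exp (2 * h)) + 2 * h * exp h)
    (hp1 : p1 = -2 * (1 - exp (2 * h)) - 2 * h * (exp (2 * h) + 1)) (hpne : p ≠ 0)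
    (hC : C = 1 + 2 * exp h + exp (2 * h) + exp h * p1 / p) :
    (2 * C - 4 * exp h) * p = 2 * (1 - exp (2 * h)) * (1 - exp h) ^ 2 := by
  rw [hC]
  field_simp
  rw [exp_two_mul_eq_sq] at hp hp1 ⊢
  linear_combination (2 * (1 + exp h ^ 2)) * hp + (2 * exp h) * hp1

theorem D2_total_mass_eq_zero {A C : ℝ} (hh : h ≠ 0) (hp : p = (1 - exp (2 * h)) + 2 * h * exp h)
    (hp1 : p1 = -2 * (1 - exp (2 * h)) - 2 * h * (exp (2 * h) + 1)) (hpne : p ≠ 0)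
    (hroot : P2 h lam = 0) (hlam : |lam| < 1)
    (hA : A = 2 * (1 - lam) ^ 2 *
        (lam * (exp (2 * h) + 1) - exp h * (lam ^ 2 + 1)) * p / (lam * deriv (P2 h) lam))
    (hC : C = 1 + 2 * exp h + exp (2 * h) + exp h * p1 / p) :
    (2 * C + A / lam) / p + 2 * ((-2 * exp h + A) / p + A / p * lam / (1 - lam)) = 0 := by
  have hlam0 := ne_zero_of_P2_root hp hpne hroot
  have hlam1 : 1 - lam ≠ 0 := by linarith [(abs_lt.mp hlam).2]
  have hlamsq : lam ^ 2 ≠ 1 :=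
    (sq_abs lam ▸ pow_lt_one₀ (abs_nonneg lam) hlam two_ne_zero).ne
  have hkey : (2 * C - 4 * exp h) * (lam * (1 - lam)) + A * (1 + lam) = 0 := by
    refine (mul_eq_zero.mp ?_).resolve_right (mul_ne_zero hpne hh)
    linear_combination (h * lam * (1 - lam)) * two_mul_sub_four_exp_mul_eq hp hp1 hpne hC
      + p * coeff_mul_eq_of_P2_root hp hp1 hpne hroot hlamsq hA
      - ((1 - exp (2 * h)) * (1 - lam)) * one_sub_sq_mul_of_P2_root hp hp1 hroot
  field_simp
  linear_combination hkey

end P2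

theorem D2_conv_poly_general (h p p1 lam A C : ℝ) (D2 : ℤ → ℝ)
    (hh : 0 < h)
    (hp : p = (1 - Real.exp (2 * h)) + 2 * h * Real.exp h)
    (hp1 : p1 = -2 * (1 - Real.exp (2 * h)) - 2 * h * (Real.exp (2 * h) + 1))
    (hpne : p ≠ 0)
    (hroot : P2 h lam = 0)
    (hlam1 : |lam| < Real.exp (-h))
    (hA : A = 2 * (1 - lam) ^ 2 *
        (lam * (Real.exp (2 * h) + 1) - Real.exp h * (lam ^ 2 + 1)) * p
        / (lam * deriv (P2 h) lam))
    (hC : C = 1 + 2 * Real.exp h + Real.exp (2 * h) + Real.exp h * p1 / p)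
    (hD : ∀ β : ℤ, D2 β =
      if β = 0 then (2 * C + A / lam) / p
      else if β.natAbs = 1 then (-2 * Real.exp h + A) / p
      else A * lam ^ (β.natAbs - 1) / p)
    (β : ℤ) (n : ℕ) (hn : n ≤ 1) :
    HasSum (fun γ : ℤ => D2 γ * (h * ((β : ℝ) - (γ : ℝ))) ^ n) 0 := by
  have hlam : |lam| < 1 := hlam1.trans (Real.exp_lt_one_iff.mpr (neg_lt_zero.mpr hh))
  have hD2 : D2 = symmGeomKernel ((2 * C + A / lam) / p) ((-2 * Real.exp h + A) / p) (A / p) lam := by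
    funext k
    rw [hD k, symmGeomKernel, mul_div_right_comm]
  have hmass : HasSum D2 0 := by
    rw [hD2, ← D2_total_mass_eq_zero hh.ne' hp hp1 hpne hroot hlam hA hC]
    exact symmGeomKernel.hasSum hlam
  have hfirst : HasSum (fun γ : ℤ => (γ : ℝ) * D2 γ) 0 :=
    hD2 ▸ symmGeomKernel.hasSum_intCast_mul hlam
  interval_cases n
  · simpa using hmass
  · simpa [mul_sub, sub_mul, mul_comm, mul_left_comm] using
      (hmass.mul_left (h * β)).sub (hfirst.mul_left h)

/-- For every integer `β` and every natural `n ≤ 1`, the series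
`∑_{γ ∈ ℤ} D_2(γ) (h(β-γ))^n` converges and equals `0`: the discrete convolution of
`D_2` with any polynomial of degree at most `2m-3 = 1` sampled at the points `hβ` is
identically zero. -/
theorem D2_conv_poly (h p p1 lam A C : ℝ) (D2 : ℤ → ℝ)
    (hh : 0 < h)
    (hp : p = (1 - Real.exp (2 * h)) + 2 * h * Real.exp h)
    (hp1 : p1 = -2 * (1 - Real.exp (2 * h)) - 2 * h * (Real.exp (2 * h) + 1))
    (hpne : p ≠ 0)
    (hroot : P2 h lam = 0)
    (hlam0 : 0 < |lam|) (hlam1 : |lam| < Real.exp (-h))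
    (hder : deriv (P2 h) lam ≠ 0)
    (hA : A = 2 * (1 - lam) ^ 2 *
        (lam * (Real.exp (2 * h) + 1) - Real.exp h * (lam ^ 2 + 1)) * p
        / (lam * deriv (P2 h) lam))
    (hC : C = 1 + 2 * Real.exp h + Real.exp (2 * h) + Real.exp h * p1 / p)
    (hD : ∀ β : ℤ, D2 β =
      if β = 0 then (2 * C + A / lam) / p
      else if β.natAbs = 1 then (-2 * Real.exp h + A) / p
      else A * lam ^ (β.natAbs - 1) / p)
    (β : ℤ) (n : ℕ) (hn : n ≤ 1) :
    HasSum (fun γ : ℤ => D2 γ * (h * ((β : ℝ) - (γ : ℝ))) ^ n) 0 :=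
  D2_conv_poly_general h p p1 lam A C D2 hh hp hp1 hpne hroot hlam1 hA hC hD β n hn
end
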